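/- Consider the transition formulas of the chart change M_{12} → M_{13} for G_{5,2} on the space F̄_5, which send a point ((c_{34}:c'_{34}), (c_{35}:c'_{35}), (c_{45}:c'_{45})) to ((d_{24}:d'_{24}), (d_{25}:d'_{25}), (d_{45}:d'_{45})) with (d_{2l}:d'_{2l}) = (c_{3l} : c_{3l} − c'_{3l}) for l = 4,5 and (d_{45}:d'_{45}) = (c_{35}(c_{34} − c'_{34}) : c_{34}(c_{35} − c'_{35})). If c'_{34} = c'_{35} = 0 and c_{34} ≠ 0, c_{35} ≠ 0, then (d_{24}:d'_{24}) = (d_{25}:d'_{25}) = (d_{45}:d'_{45}) = (1:1); in particular the continuous extension of this transition map sends the entire one-parameter family {((1:0), (1:0), (c_{45}:c'_{45}))} ⊆ F̄_5 to the single point ((1:1),(1:1),(1:1)), so this extension is not injective on F̄_5. -/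

import Mathlib

open Projectivization

/-- The complex projective line `ℂP¹`. -/
abbrev CP1 : Type := Projectivization ℂ (Fin 2 → ℂ)

lemma v10_ne_zero : (![1, 0] : Fin 2 → ℂ) ≠ 0 := by
  intro h; have := congrFun h 0; simp at this

lemma v11_ne_zero : (![1, 1] : Fin 2 → ℂ) ≠ 0 := by
  intro h; have := congrFun h 0; simp at this

/-- The variety `F̄₅ ⊆ (ℂP¹)³`: triples `((c₃₄:c'₃₄), (c₃₅:c'₃₅), (c₄₅:c'₄₅))` with
`c₃₄·c'₃₅·c₄₅ = c'₃₄·c₃₅·c'₄₅`, expressed through homogeneous representatives. -/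
def Fbar5 : Set (CP1 × CP1 × CP1) :=
  {x | Projectivization.rep x.1 0 * Projectivization.rep x.2.1 1 * Projectivization.rep x.2.2 0
    = Projectivization.rep x.1 1 * Projectivization.rep x.2.1 0 * Projectivization.rep x.2.2 1}

namespace Projectivization

variable {K ι : Type*} [DivisionRing K]

theorem rep_mk_apply_eq_zero_iff {v : ι → K} (hv : v ≠ 0) (i : ι) :
    (mk K v hv).rep i = 0 ↔ v i = 0 := by
  obtain ⟨a, ha⟩ := exists_smul_eq_mk_rep K v hv
  rw [← ha, Pi.smul_apply, smul_eq_zero_iff_eq]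

theorem mk_ne_mk_of_apply_eq_zero {v w : ι → K} (hv : v ≠ 0) (hw : w ≠ 0) {i : ι}
    (hvi : v i = 0) (hwi : w i ≠ 0) : mk K v hv ≠ mk K w hw := by
  intro h
  apply hwi
  rwa [← rep_mk_apply_eq_zero_iff hw, ← h, rep_mk_apply_eq_zero_iff]

theorem mk_eq_mk_one_one {v : Fin 2 → K} (hv : v ≠ 0) (h : v 0 = v 1)
    (h11 : (![1, 1] : Fin 2 → K) ≠ 0) : mk K v hv = mk K ![1, 1] h11 :=
  (mk_eq_mk_iff' K _ _ _ _).2 ⟨v 0, by ext i; fin_cases i <;> simp [h]⟩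

end Projectivization

theorem one_zero_one_zero_mem_Fbar5 (z : CP1) :
    (mk ℂ ![1, 0] v10_ne_zero, mk ℂ ![1, 0] v10_ne_zero, z) ∈ Fbar5 := by
  have h : (mk ℂ ![1, 0] v10_ne_zero).rep 1 = 0 := (rep_mk_apply_eq_zero_iff _ _).2 rfl
  simp [Fbar5, h]

/-- For the chart change `M₁₂ → M₁₃` of `G₅,₂`, with images
`(d₂ₗ:d'₂ₗ) = (c₃ₗ : c₃ₗ - c'₃ₗ)` (`l = 4,5`) and
`(d₄₅:d'₄₅) = (c₃₅(c₃₄ - c'₃₄) : c₃₄(c₃₅ - c'₃₅))`: if `c'₃₄ = c'₃₅ = 0` and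
`c₃₄ ≠ 0 ≠ c₃₅`, then all three image coordinates equal `(1:1)`; the whole
one-parameter family `((1:0), (1:0), (c₄₅:c'₄₅))` lies in `F̄₅` (the cubic relation
holds for every `(c₄₅, c'₄₅)`), it contains distinct points, and they are all sent
to the single point `((1:1),(1:1),(1:1))` — so the continuous extension of this
transition map is not injective on `F̄₅`. -/
theorem statement10 (c34 c'34 c35 c'35 : ℂ)
    (h34 : c34 ≠ 0) (h35 : c35 ≠ 0) (h'34 : c'34 = 0) (h'35 : c'35 = 0) :
    (∀ c45 c'45 : ℂ, c34 * c'35 * c45 = c'34 * c35 * c'45) ∧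
    (∀ z : CP1, (Projectivization.mk ℂ ![1, 0] v10_ne_zero,
        Projectivization.mk ℂ ![1, 0] v10_ne_zero, z) ∈ Fbar5) ∧
    Projectivization.mk ℂ ![c34, c34 - c'34]
        (by intro hh; exact h34 (by simpa using congrFun hh 0))
      = Projectivization.mk ℂ ![1, 1] v11_ne_zero ∧
    Projectivization.mk ℂ ![c35, c35 - c'35]
        (by intro hh; exact h35 (by simpa using congrFun hh 0))
      = Projectivization.mk ℂ ![1, 1] v11_ne_zero ∧
    Projectivization.mk ℂ ![c35 * (c34 - c'34), c34 * (c35 - c'35)]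
        (by
          intro hh
          have h0 : c35 * (c34 - c'34) = 0 := by simpa using congrFun hh 0
          rw [h'34, sub_zero] at h0
          exact mul_ne_zero h35 h34 h0)
      = Projectivization.mk ℂ ![1, 1] v11_ne_zero ∧
    ∃ x y : CP1 × CP1 × CP1, x ≠ y ∧ x ∈ Fbar5 ∧ y ∈ Fbar5 ∧
      x.1 = Projectivization.mk ℂ ![1, 0] v10_ne_zero ∧
      x.2.1 = Projectivization.mk ℂ ![1, 0] v10_ne_zero ∧
      y.1 = Projectivization.mk ℂ ![1, 0] v10_ne_zero ∧
      y.2.1 = Projectivization.mk ℂ ![1, 0] v10_ne_zero := by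
  set p10 := mk ℂ ![1, 0] v10_ne_zero
  have hne : p10 ≠ mk ℂ ![1, 1] v11_ne_zero :=
    mk_ne_mk_of_apply_eq_zero _ _ (i := 1) (by simp) (by simp)
  refine ⟨fun _ _ ↦ by simp [h'34, h'35], one_zero_one_zero_mem_Fbar5,
    mk_eq_mk_one_one _ (by simp [h'34]) _, mk_eq_mk_one_one _ (by simp [h'35]) _,
    mk_eq_mk_one_one _ (by simp [h'34, h'35, mul_comm]) _, ?_⟩
  exact ⟨(p10, p10, p10), (p10, p10, mk ℂ ![1, 1] v11_ne_zero), by simpa using hne,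
    one_zero_one_zero_mem_Fbar5 _, one_zero_one_zero_mem_Fbar5 _, rfl, rfl, rfl, rfl⟩
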